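/- Fix n ≥ 2. For each k ∈ ℕ let α_k := 2^{−nk}, 𝔻_k := {2^{−j} : 0 ≤ j ≤ k}, and 𝓡_k := { [0,s₁] × ⋯ × [0,s_{n−1}] × [0, α_k/(s₁·…·s_{n−1})] : s₁, …, s_{n−1} ∈ 𝔻_k }, and set 𝓡 := ⋃_{k∈ℕ} 𝓡_k. Then for every Orlicz function Φ satisfying Φ = o(Φ_{n−1}) at ∞, the maximal operator M_𝓡 does not satisfy a weak L^Φ inequality; in this sense de Guzmán's weak L log^{n−1} L estimate for M_𝓡 is optimal. -/

import Mathlib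

open MeasureTheory Set Filter
open scoped ENNReal

noncomputable section

/-- The standard rectangle `[0, α 0] × ⋯ × [0, α (n-1)]` in `ℝ^n`. -/
def stdRect (n : ℕ) (α : Fin n → ℝ) : Set (Fin n → ℝ) :=
  Set.univ.pi fun i => Set.Icc 0 (α i)

/-- A standard rectangle in `ℝ^n`: `[0,α₁]×⋯×[0,αₙ]` with `0 < αᵢ ≤ 1`. -/
def IsStandardRect {n : ℕ} (R : Set (Fin n → ℝ)) : Prop :=
  ∃ α : Fin n → ℝ, (∀ i, 0 < α i ∧ α i ≤ 1) ∧ R = stdRect n α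

/-- A standard dyadic rectangle in `ℝ^n`: each side is `2^{-mᵢ}` with `mᵢ ∈ ℕ`. -/
def IsStandardDyadicRect {n : ℕ} (R : Set (Fin n → ℝ)) : Prop :=
  ∃ m : Fin n → ℕ, R = stdRect n fun i => (2 : ℝ) ^ (-(m i : ℤ))

/-- The maximal operator associated to a family `𝓡` of rectangles, allowing all translates:
`M_𝓡 f (x) = sup { |R|⁻¹ ∫_{τ(R)} |f| : R ∈ 𝓡, τ translation, x ∈ τ(R) }`. -/
def maximalFn {n : ℕ} (𝓡 : Set (Set (Fin n → ℝ))) (f : (Fin n → ℝ) → ℝ)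
    (x : Fin n → ℝ) : ℝ≥0∞ :=
  ⨆ (R : Set (Fin n → ℝ)) (_ : R ∈ 𝓡) (v : Fin n → ℝ)
      (_ : x ∈ (fun y => v + y) '' R),
    (∫⁻ y in (fun y => v + y) '' R, ENNReal.ofReal |f y|) / volume R

/-- A family of sets has finite width if it is a finite union of subfamilies
each totally ordered by inclusion. -/
def FiniteWidth {β : Type*} (𝓕 : Set (Set β)) : Prop :=
  ∃ (N : ℕ) (c : Fin N → Set (Set β)),
    𝓕 = (⋃ i, c i) ∧ ∀ i, IsChain (· ⊆ ·) (c i)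

/-- An Orlicz function: convex, increasing on `[0,∞)`, vanishing at `0`. -/
def IsOrlicz (Φ : ℝ → ℝ) : Prop :=
  ConvexOn ℝ (Set.Ici 0) Φ ∧ MonotoneOn Φ (Set.Ici 0) ∧ Φ 0 = 0

/-- `Φ_d(t) = t (1 + log₊^d t)`. -/
def phiD (d : ℕ) (t : ℝ) : ℝ := t * (1 + max (Real.log t) 0 ^ d)

/-- `M_𝓡` satisfies a weak `L^Φ` inequality. -/
def WeakOrlicz {n : ℕ} (𝓡 : Set (Set (Fin n → ℝ))) (Φ : ℝ → ℝ) : Prop :=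
  ∃ C : ℝ, 0 < C ∧ ∀ f : (Fin n → ℝ) → ℝ, Measurable f →
    Integrable (fun x => Φ |f x|) → ∀ l : ℝ, 0 < l →
      volume {x | ENNReal.ofReal l < maximalFn 𝓡 f x} ≤
        ∫⁻ x, ENNReal.ofReal (Φ (C * |f x| / l))

/-- `M_𝓡` satisfies a weak `(1,1)` inequality. -/
def Weak11 {n : ℕ} (𝓡 : Set (Set (Fin n → ℝ))) : Prop :=
  ∃ C : ℝ, 0 < C ∧ ∀ f : (Fin n → ℝ) → ℝ, Measurable f → Integrable f →
    ∀ l : ℝ, 0 < l →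
      volume {x | ENNReal.ofReal l < maximalFn 𝓡 f x} ≤
        ENNReal.ofReal (C * (∫ x, |f x|) / l)

/-- `M_𝓡` satisfies a weak `L log^d L` inequality. -/
def WeakLLog {n : ℕ} (𝓡 : Set (Set (Fin n → ℝ))) (d : ℕ) : Prop :=
  ∃ c : ℝ, 0 < c ∧ ∀ f : (Fin n → ℝ) → ℝ, Measurable f → ∀ l : ℝ, 0 < l →
    volume {x | ENNReal.ofReal l < maximalFn 𝓡 f x} ≤
      ENNReal.ofReal c * ∫⁻ x, ENNReal.ofReal (phiD d (|f x| / l))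

/-- Projection onto the plane of coordinates `0` and `j`. -/
def planeProj {n : ℕ} (hn : 2 ≤ n) (j : Fin n) (x : Fin n → ℝ) : Fin 2 → ℝ :=
  ![x ⟨0, by omega⟩, x j]

/-- The family `𝓡_k = { [0,s₁]×⋯×[0,s_{n-1}]×[0, a/(s₁⋯s_{n-1})] : sᵢ ∈ 𝔻_k }`. -/
def guzmanFamily (n : ℕ) (hn : 2 ≤ n) (a : ℝ) (k : ℕ) : Set (Set (Fin n → ℝ)) :=
  { R | ∃ s : Fin n → ℝ,
      (∀ i : Fin n, (i : ℕ) < n - 1 → ∃ j : ℕ, j ≤ k ∧ s i = (2 : ℝ) ^ (-(j : ℤ))) ∧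
      s ⟨n - 1, by omega⟩ =
        a / ∏ i ∈ Finset.univ.filter (fun i : Fin n => (i : ℕ) < n - 1), s i ∧
      R = stdRect n s }

/-- The family `𝓡̃_k` in `ℝ^n`: rectangles
`[0,s₁]×⋯×[0,s_{n-2}]×[0, 2^{-(n-1)k}/(s₁⋯s_{n-2})]×[0,1]` with `sᵢ ∈ 𝔻_k`. -/
def exFamily (n : ℕ) (hn : 3 ≤ n) (k : ℕ) : Set (Set (Fin n → ℝ)) :=
  { R | ∃ s : Fin n → ℝ,
      (∀ i : Fin n, (i : ℕ) < n - 2 → ∃ j : ℕ, j ≤ k ∧ s i = (2 : ℝ) ^ (-(j : ℤ))) ∧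
      s ⟨n - 2, by omega⟩ = (2 : ℝ) ^ (-((n - 1) * k : ℤ)) /
        ∏ i ∈ Finset.univ.filter (fun i : Fin n => (i : ℕ) < n - 2), s i ∧
      s ⟨n - 1, by omega⟩ = 1 ∧
      R = stdRect n s }

/-- The hypothesis of Theorem `thm.stokn`: for every `k` there are a dyadic number
`α = 2^{-p} ≤ 2^{-k-1}` and strictly increasing dyadic numbers `0 < A i 0 < ⋯ < A i k ≤ 1`
(`i < n-1`) such that for every nonincreasing `J` with values `≤ k`,
the rectangle `(∏_{i<n-1} [0, A i (J i)]) × [0, 2^{-p}]` belongs to `𝓡`. -/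
def StokolosHyp (n : ℕ) (𝓡 : Set (Set (Fin n → ℝ))) : Prop :=
  ∀ k : ℕ, ∃ (p : ℕ) (A : ℕ → ℕ → ℝ),
    k + 1 ≤ p ∧
    (∀ i < n - 1, ∀ j ≤ k, ∃ m : ℕ, A i j = (2 : ℝ) ^ (-(m : ℤ))) ∧
    (∀ i < n - 1, ∀ j < k, A i j < A i (j + 1)) ∧
    (∀ i < n - 1, A i k ≤ 1) ∧
    ∀ J : ℕ → ℕ, (∀ l, J l ≤ k) → (∀ a b : ℕ, a ≤ b → J b ≤ J a) →
      stdRect n (fun i : Fin n =>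
        if (i : ℕ) < n - 1 then A (i : ℕ) (J (i : ℕ)) else (2 : ℝ) ^ (-(p : ℤ))) ∈ 𝓡

/-- For a chain `R_0 ≺ ⋯ ≺ R_k` with `R_j = ∏_l [0, α l j]`, the rectangle
`R^i_j = p_{1,…,i-1}(R_k) × p_{i,…,n}(R_j)` (here `i` is 0-indexed). -/
def hatRect (n : ℕ) (α : Fin n → ℕ → ℝ) (k : ℕ) (i : Fin n) (j : ℕ) :
    Set (Fin n → ℝ) :=
  { x | ∀ l : Fin n, ((l : ℕ) < (i : ℕ) → x l ∈ Set.Icc 0 (α l k)) ∧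
        ((i : ℕ) ≤ (l : ℕ) → x l ∈ Set.Icc 0 (α l j)) }

/-- Rademacher-type functions: `r 1 = χ_{ℤ+[0,1/2)}` and `r i (x) = r (i-1) (2x mod 1)`,
i.e. `r i (x) = 1` iff `fract (2^{i-1} x) < 1/2`. -/
def rademacher (i : ℕ) (x : ℝ) : ℝ :=
  if Int.fract ((2 : ℝ) ^ (i - 1) * x) < 1 / 2 then 1 else 0

/-- The set `Y_J ⊆ R₀` (here `J : ℕ → ℕ` carries the conventions `J 0 = k`, `J n = 0`;
coordinate `i` of `ℝ^n` is 0-indexed, corresponding to the paper's `i+1`). -/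
def Yset (n k : ℕ) (m : ℕ → ℕ → ℕ) (J : ℕ → ℕ) : Set (Fin n → ℝ) :=
  stdRect n (fun i => (2 : ℝ) ^ (-(m (i : ℕ) k : ℤ))) ∩
    { x | (∏ i : Fin n, ∏ μ ∈ Finset.Icc (J ((i : ℕ) + 1)) (J (i : ℕ)),
        rademacher (m (i : ℕ) μ) (x i)) = 1 }

/-- The set `E_{j₁,…,j_{r-1}}`: union of the `Y_J` over the `J` extending the given prefix
`j` on positions `1,…,r-1`, nonincreasing, with `J 0 = k` and `J n = 0`. -/
def Eset (n k r : ℕ) (m : ℕ → ℕ → ℕ) (j : ℕ → ℕ) : Set (Fin n → ℝ) :=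
  ⋃ J ∈ { J : ℕ → ℕ | J 0 = k ∧ J n = 0 ∧ (∀ a b : ℕ, a ≤ b → J b ≤ J a) ∧
      ∀ l, 1 ≤ l → l < r → J l = j l },
    Yset n k m J

/-!
Test the weak inequality on `f = 𝟙_E`, `E = [0,2^{-k}]^m × [0,a]`, where `m = n - 1` and
`a = α_k`. For each of the `(k+1)^m` choices `j ∈ {0,…,k}^m` the rectangle
`R_j = ∏ᵢ [0,2^{-jᵢ}] × [0, a 2^{∑ jᵢ}]` lies in `𝓡_k`, contains `E` and has measure `a`, so `E`
has density `2^{-mk}` in `R_j` and `M_𝓡 f > 2^{-mk-1}` on `⋃ R_j`. The `R_j` contain pairwise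
disjoint dyadic pieces of measure `2^{-m} a`, so `|⋃ R_j| ≥ (k+1)^m 2^{-m} a` while
`|E| = 2^{-mk} a`. The weak `L^Φ` inequality then forces `Φ(t)/t ≳ (k+1)^m ≈ log^m t` at
`t = 2C 2^{mk}`, which `Φ = o(Φ_m)` forbids.
-/

section MaximalFn

variable {n : ℕ} {𝓡 : Set (Set (Fin n → ℝ))}

theorem div_volume_le_maximalFn_indicator {R E : Set (Fin n → ℝ)} (hR : R ∈ 𝓡)
    (hE : MeasurableSet E) (hER : E ⊆ R) {x : Fin n → ℝ} (hx : x ∈ R) :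
    volume E / volume R ≤ maximalFn 𝓡 (E.indicator 1) x := by
  have himage : (fun y => (0 : Fin n → ℝ) + y) '' R = R := by simp
  have hint : ∫⁻ y in R, ENNReal.ofReal |E.indicator 1 y| = volume E := by
    have hind : (fun y => ENNReal.ofReal |E.indicator (1 : (Fin n → ℝ) → ℝ) y|) =
        E.indicator 1 := by
      ext y; by_cases hy : y ∈ E <;> simp [hy]
    rw [hind, lintegral_indicator_one hE, Measure.restrict_apply hE, inter_eq_left.mpr hER]
  refine le_iSup₂_of_le R hR (le_iSup₂_of_le 0 (himage.symm ▸ hx) ?_)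
  rw [himage, hint]

theorem subset_setOf_lt_maximalFn_indicator {ι : Sort*} {R : ι → Set (Fin n → ℝ)}
    {E : Set (Fin n → ℝ)} {l : ℝ} (hR : ∀ i, R i ∈ 𝓡) (hE : MeasurableSet E)
    (hER : ∀ i, E ⊆ R i) (hl : ∀ i, ENNReal.ofReal l < volume E / volume (R i)) :
    ⋃ i, R i ⊆ {x | ENNReal.ofReal l < maximalFn 𝓡 (E.indicator 1) x} :=
  iUnion_subset fun i _ hx =>
    (hl i).trans_le (div_volume_le_maximalFn_indicator (hR i) hE (hER i) hx)

theorem WeakOrlicz.exists_volume_lt_maximalFn_indicator_le {Φ : ℝ → ℝ} (h : WeakOrlicz 𝓡 Φ)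
    (hΦ : Φ 0 = 0) :
    ∃ C > 0, ∀ E : Set (Fin n → ℝ), MeasurableSet E → volume E ≠ ⊤ → ∀ l > 0,
      volume {x | ENNReal.ofReal l < maximalFn 𝓡 (E.indicator 1) x} ≤
        ENNReal.ofReal (Φ (C / l)) * volume E := by
  obtain ⟨C, hC, hweak⟩ := h
  refine ⟨C, hC, fun E hE hEfin l hl => ?_⟩
  have hcomp : ∀ c : ℝ, ∀ x, Φ (c * |E.indicator (1 : (Fin n → ℝ) → ℝ) x|) =
      E.indicator (fun _ => Φ c) x := by
    intro c x; by_cases hx : x ∈ E <;> simp [hx, hΦ]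
  have hint : Integrable (fun x => Φ |E.indicator (1 : (Fin n → ℝ) → ℝ) x|) := by
    refine ((integrable_indicator_iff hE).mpr (integrableOn_const (C := Φ 1) hEfin)).congr
      (ae_of_all _ fun x => ?_)
    simpa using (hcomp 1 x).symm
  calc _ ≤ ∫⁻ x, ENNReal.ofReal (Φ (C * |E.indicator 1 x| / l)) :=
        hweak _ (measurable_one.indicator hE) hint l hl
    _ = ∫⁻ x, E.indicator (fun _ => ENNReal.ofReal (Φ (C / l))) x := by
        simp_rw [mul_div_right_comm C, hcomp]
        congr 1 with x
        by_cases hx : x ∈ E <;> simp [hx]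
    _ = ENNReal.ofReal (Φ (C / l)) * volume E := lintegral_indicator_const hE _

end MaximalFn

theorem volume_stdRect {n : ℕ} {α : Fin n → ℝ} (hα : ∀ i, 0 ≤ α i) :
    volume (stdRect n α) = ENNReal.ofReal (∏ i, α i) := by
  simp_rw [stdRect, volume_pi_pi, Real.volume_Icc, sub_zero]
  exact (ENNReal.ofReal_prod_of_nonneg fun i _ => hα i).symm

theorem measurableSet_stdRect (n : ℕ) (α : Fin n → ℝ) : MeasurableSet (stdRect n α) :=
  MeasurableSet.univ_pi fun _ => measurableSet_Icc

section GuzmanRect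

variable {m : ℕ}

def guzmanRect (a : ℝ) (j : Fin m → ℕ) : Set (Fin (m + 1) → ℝ) :=
  stdRect (m + 1) (Fin.snoc (fun i => (2⁻¹ : ℝ) ^ j i) (a * 2 ^ ∑ i, j i))

def guzmanCore (m : ℕ) (a : ℝ) (k : ℕ) : Set (Fin (m + 1) → ℝ) :=
  stdRect (m + 1) (Fin.snoc (fun _ => (2⁻¹ : ℝ) ^ k) a)

def guzmanPiece (a : ℝ) (j : Fin m → ℕ) : Set (Fin (m + 1) → ℝ) :=
  univ.pi (Fin.snoc (α := fun _ => Set ℝ) (fun i => Ioc ((2⁻¹ : ℝ) ^ (j i + 1)) (2⁻¹ ^ j i))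
    (Icc 0 (a * 2 ^ ∑ i, j i)))

theorem guzmanRect_mem_guzmanFamily (hn : 2 ≤ m + 1) (a : ℝ) {k : ℕ} {j : Fin m → ℕ}
    (hj : ∀ i, j i ≤ k) : guzmanRect a j ∈ guzmanFamily (m + 1) hn a k := by
  refine ⟨_, fun i hi => ?_, ?_, rfl⟩
  · obtain ⟨i, rfl⟩ := Fin.exists_castSucc_eq.mpr (Fin.ne_last_of_lt (b := Fin.last m) hi)
    exact ⟨j i, hj i, by simp⟩
  · rw [show (⟨m + 1 - 1, by omega⟩ : Fin (m + 1)) = Fin.last m from Fin.ext (by simp)]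
    simp [Finset.prod_filter, Fin.prod_univ_castSucc, Finset.prod_pow_eq_pow_sum]

theorem volume_guzmanRect {a : ℝ} (ha : 0 ≤ a) (j : Fin m → ℕ) :
    volume (guzmanRect a j) = ENNReal.ofReal a := by
  rw [guzmanRect, volume_stdRect]
  · rw [Fin.prod_univ_castSucc]
    simp only [Fin.snoc_castSucc, Fin.snoc_last]
    rw [Finset.prod_pow_eq_pow_sum, inv_pow]
    field_simp
  · intro i; induction i using Fin.lastCases <;> simp; positivity

theorem volume_guzmanCore {a : ℝ} (ha : 0 ≤ a) (k : ℕ) :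
    volume (guzmanCore m a k) = ENNReal.ofReal ((2⁻¹ ^ k) ^ m * a) := by
  rw [guzmanCore, volume_stdRect]
  · simp [Fin.prod_univ_castSucc]
  · intro i; induction i using Fin.lastCases <;> simp [ha]

theorem guzmanCore_subset_guzmanRect {a : ℝ} (ha : 0 ≤ a) {k : ℕ} {j : Fin m → ℕ}
    (hj : ∀ i, j i ≤ k) : guzmanCore m a k ⊆ guzmanRect a j := by
  refine pi_mono fun i _ => Icc_subset_Icc_right ?_
  induction i using Fin.lastCases with
  | last => simpa using le_mul_of_one_le_right ha (one_le_pow₀ one_le_two)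
  | cast i => simpa using pow_le_pow_of_le_one (by norm_num : (0 : ℝ) ≤ 2⁻¹) (by norm_num) (hj i)

theorem guzmanPiece_subset_guzmanRect (a : ℝ) (j : Fin m → ℕ) :
    guzmanPiece a j ⊆ guzmanRect a j := by
  refine pi_mono fun i _ => ?_
  induction i using Fin.lastCases with
  | last => simp
  | cast i => simpa using Ioc_subset_Icc_self.trans (Icc_subset_Icc_left (by positivity))

theorem volume_guzmanPiece (a : ℝ) (j : Fin m → ℕ) :
    volume (guzmanPiece a j) = ENNReal.ofReal (2⁻¹ ^ m * a) := by
  have hside : ∀ p : ℕ, volume (Ioc ((2⁻¹ : ℝ) ^ (p + 1)) (2⁻¹ ^ p)) =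
      ENNReal.ofReal (2⁻¹ * 2⁻¹ ^ p) := fun p => by
    rw [Real.volume_Ioc]; ring_nf
  rw [guzmanPiece, volume_pi_pi, Fin.prod_univ_castSucc]
  simp only [Fin.snoc_castSucc, Fin.snoc_last, hside, Real.volume_Icc, sub_zero]
  rw [← ENNReal.ofReal_prod_of_nonneg fun _ _ => by positivity,
    ← ENNReal.ofReal_mul (by positivity), Finset.prod_mul_distrib, Finset.prod_const,
    Finset.card_univ, Fintype.card_fin, Finset.prod_pow_eq_pow_sum, inv_pow, inv_pow]
  field_simp

theorem pairwise_disjoint_guzmanPiece (a : ℝ) :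
    Pairwise (Function.onFun Disjoint (guzmanPiece (m := m) a)) := by
  intro j j' hjj'
  obtain ⟨i, hi⟩ := Function.ne_iff.mp hjj'
  refine disjoint_univ_pi.mpr ⟨i.castSucc, ?_⟩
  simpa using
    (pow_right_anti₀ (by norm_num : (0 : ℝ) ≤ 2⁻¹) (by norm_num)).pairwise_disjoint_on_Ioc_succ hi

end GuzmanRect

theorem volume_iUnion_guzmanPiece {m : ℕ} (a : ℝ) (k : ℕ) :
    volume (⋃ j : Fin m → Fin (k + 1), guzmanPiece a fun i => j i) =
      (k + 1) ^ m * ENNReal.ofReal (2⁻¹ ^ m * a) := by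
  have hmeas : ∀ j : Fin m → ℕ, MeasurableSet (guzmanPiece a j) := fun j =>
    MeasurableSet.univ_pi fun i => by
      induction i using Fin.lastCases <;> simp [measurableSet_Ioc, measurableSet_Icc]
  have hinj : Function.Injective fun (j : Fin m → Fin (k + 1)) (i : Fin m) => (j i : ℕ) :=
    fun j j' h => funext fun i => Fin.ext (congr_fun h i)
  rw [measure_iUnion ((pairwise_disjoint_guzmanPiece a).comp_of_injective hinj) fun j => hmeas _,
    tsum_fintype]
  simp [volume_guzmanPiece]

theorem ofReal_le_volume_setOf_lt_maximalFn_guzmanCore {m : ℕ} {𝓡 : Set (Set (Fin (m + 1) → ℝ))}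
    (hn : 2 ≤ m + 1) {a : ℝ} (ha : 0 < a) {k : ℕ} (h𝓡 : guzmanFamily (m + 1) hn a k ⊆ 𝓡) :
    ENNReal.ofReal (((k : ℝ) + 1) ^ m * (2⁻¹ ^ m * a)) ≤
      volume {x | ENNReal.ofReal ((2⁻¹ ^ k) ^ m / 2) <
        maximalFn 𝓡 ((guzmanCore m a k).indicator 1) x} := by
  have hmem : ∀ j : Fin m → Fin (k + 1), guzmanRect a (fun i => (j i : ℕ)) ∈ 𝓡 :=
    fun j => h𝓡 (guzmanRect_mem_guzmanFamily hn a fun i => Fin.is_le (j i))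
  have hsub : ∀ j : Fin m → Fin (k + 1), guzmanCore m a k ⊆ guzmanRect a fun i => (j i : ℕ) :=
    fun j => guzmanCore_subset_guzmanRect ha.le fun i => Fin.is_le (j i)
  have hdens : ∀ j : Fin m → Fin (k + 1), ENNReal.ofReal ((2⁻¹ ^ k) ^ m / 2) <
      volume (guzmanCore m a k) / volume (guzmanRect a fun i => (j i : ℕ)) := by
    intro j
    rw [volume_guzmanCore ha.le, volume_guzmanRect ha.le, ← ENNReal.ofReal_div_of_pos ha,
      mul_div_cancel_right₀ _ ha.ne', ENNReal.ofReal_lt_ofReal_iff (by positivity)]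
    linarith [show (0 : ℝ) < (2⁻¹ ^ k) ^ m by positivity]
  calc ENNReal.ofReal (((k : ℝ) + 1) ^ m * (2⁻¹ ^ m * a))
      = volume (⋃ j : Fin m → Fin (k + 1), guzmanPiece a fun i => j i) := by
        rw [volume_iUnion_guzmanPiece, ENNReal.ofReal_mul (by positivity)]
        norm_cast
    _ ≤ volume (⋃ j : Fin m → Fin (k + 1), guzmanRect a fun i => j i) :=
        measure_mono (iUnion_mono fun j => guzmanPiece_subset_guzmanRect _ _)
    _ ≤ _ := measure_mono <|
        subset_setOf_lt_maximalFn_indicator hmem (measurableSet_stdRect _ _) hsub hdens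

theorem WeakOrlicz.exists_succ_pow_le_mul_div_guzmanFamily {m : ℕ} (hn : 2 ≤ m + 1)
    {α : ℕ → ℝ} (hα : ∀ k, 0 < α k) {Φ : ℝ → ℝ}
    (h : WeakOrlicz (⋃ k, guzmanFamily (m + 1) hn (α k) k) Φ) (hΦ : Φ 0 = 0) :
    ∃ C > 0, ∀ k : ℕ, ((k : ℝ) + 1) ^ m ≤
      2 ^ (m + 1) * C * (Φ (2 * C * 2 ^ (m * k)) / (2 * C * 2 ^ (m * k))) := by
  obtain ⟨C, hC, hweak⟩ := h.exists_volume_lt_maximalFn_indicator_le hΦ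
  refine ⟨C, hC, fun k => ?_⟩
  have ha := hα k
  have hδ : ((2 : ℝ)⁻¹ ^ k) ^ m = (2 ^ (m * k))⁻¹ := by
    rw [inv_pow, inv_pow, ← pow_mul, mul_comm k m]
  have hcore := volume_guzmanCore (m := m) ha.le k
  have key := calc
    ENNReal.ofReal (((k : ℝ) + 1) ^ m * (2⁻¹ ^ m * α k))
      ≤ volume {x | ENNReal.ofReal ((2⁻¹ ^ k) ^ m / 2) <
          maximalFn (⋃ k, guzmanFamily (m + 1) hn (α k) k)
            ((guzmanCore m (α k) k).indicator 1) x} :=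
        ofReal_le_volume_setOf_lt_maximalFn_guzmanCore hn ha (subset_iUnion_of_subset k le_rfl)
    _ ≤ ENNReal.ofReal (Φ (C / ((2⁻¹ ^ k) ^ m / 2))) * volume (guzmanCore m (α k) k) :=
        hweak _ (measurableSet_stdRect _ _) (hcore ▸ ENNReal.ofReal_ne_top) _ (by positivity)
    _ = ENNReal.ofReal (Φ (2 * C * 2 ^ (m * k)) * ((2 ^ (m * k))⁻¹ * α k)) := by
        rw [hcore, hδ, ← ENNReal.ofReal_mul' (by positivity),
          show C / ((2 ^ (m * k))⁻¹ / 2) = 2 * C * 2 ^ (m * k) by field_simp]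
  have hle := (ENNReal.ofReal_le_ofReal_iff'.mp key).resolve_right (not_le.mpr (by positivity))
  field_simp at hle ⊢
  calc ((k : ℝ) + 1) ^ m * 2 * 2 ^ (m * k)
      = (k + 1) ^ m * (1 / 2) ^ m * 2 ^ (m * k) * 2 ^ (m + 1) := by
        rw [pow_succ, one_div_pow]; field_simp
    _ ≤ Φ (2 * C * 2 ^ (m * k)) * 2 ^ (m + 1) := by gcongr

theorem phiD_pos (d : ℕ) {t : ℝ} (ht : 0 < t) : 0 < phiD d t :=
  mul_pos ht (add_pos_of_pos_of_nonneg one_pos (pow_nonneg (le_max_right _ _) d))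

theorem phiD_le_of_log_le {d : ℕ} {t B : ℝ} (ht : 0 ≤ t) (hB : 1 ≤ B) (hlog : Real.log t ≤ B) :
    phiD d t ≤ 2 * B ^ d * t := by
  have hmax : max (Real.log t) 0 ^ d ≤ B ^ d :=
    pow_le_pow_left₀ (le_max_right _ _) (max_le hlog (zero_le_one.trans hB)) d
  have hone : 1 ≤ B ^ d := one_le_pow₀ hB
  rw [phiD, mul_comm _ t]
  exact mul_le_mul_of_nonneg_left (by linarith) ht

theorem not_tendsto_div_phiD_zero {Φ : ℝ → ℝ} {d : ℕ} {t : ℕ → ℝ} (ht : Tendsto t atTop atTop)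
    {c L : ℝ} (hc : 0 < c) (hL : 1 ≤ L) (hlog : ∀ k, Real.log (t k) ≤ L * (k + 1))
    (hΦ : ∀ k : ℕ, ((k : ℝ) + 1) ^ d ≤ c * (Φ (t k) / t k)) :
    ¬ Tendsto (fun s => Φ s / phiD d s) atTop (nhds 0) := by
  intro h
  have hbound : ∀ᶠ k in atTop, 1 / (2 * c * L ^ d) ≤ Φ (t k) / phiD d (t k) := by
    filter_upwards [ht.eventually_gt_atTop 0] with k htk
    have hphi := phiD_le_of_log_le (d := d) htk.le (one_le_mul_of_one_le_of_one_le hL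
      (by linarith [k.cast_nonneg (α := ℝ)])) (hlog k)
    have hk := hΦ k
    rw [div_le_div_iff₀ (by positivity) (phiD_pos d htk), one_mul]
    rw [mul_div_assoc', le_div_iff₀ htk] at hk
    calc phiD d (t k) ≤ 2 * L ^ d * ((k + 1) ^ d * t k) := by rw [mul_pow] at hphi; linarith
      _ ≤ 2 * L ^ d * (c * Φ (t k)) := by gcongr
      _ = Φ (t k) * (2 * c * L ^ d) := by ring
  exact absurd (ge_of_tendsto (h.comp ht) hbound) (not_le.mpr (by positivity))

theorem Real.log_mul_two_pow_le {b : ℝ} (hb : 0 < b) (n : ℕ) :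
    Real.log (b * 2 ^ n) ≤ |Real.log b| + n := by
  rw [Real.log_mul hb.ne' (by positivity), Real.log_pow]
  gcongr
  · exact le_abs_self _
  · exact mul_le_of_le_one_right n.cast_nonneg (by linarith [Real.log_two_lt_d9])

/-- Theorem `thm.stokn2`. For `𝓡 = ⋃_k 𝓡_k` with `α_k = 2^{-nk}`,
de Guzmán's weak `L log^{n-1} L` estimate is optimal: `M_𝓡` satisfies no weak `L^Φ`
inequality for any Orlicz function `Φ = o(Φ_{n-1})` at `∞`. -/
theorem guzman_sharp_for_guzmanFamily (n : ℕ) (hn : 2 ≤ n) :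
    ∀ Φ : ℝ → ℝ, IsOrlicz Φ →
      Tendsto (fun t => Φ t / phiD (n - 1) t) atTop (nhds 0) →
      ¬ WeakOrlicz (⋃ k : ℕ, guzmanFamily n hn ((2 : ℝ) ^ (-((n : ℤ) * k))) k) Φ := by
  intro Φ hΦ hlim hW
  obtain ⟨m, rfl⟩ : ∃ m, n = m + 1 := ⟨n - 1, by omega⟩
  have hm : 1 ≤ m := by omega
  obtain ⟨C, hC, hbound⟩ :=
    hW.exists_succ_pow_le_mul_div_guzmanFamily hn (fun k => by positivity) hΦ.2.2
  rw [Nat.add_sub_cancel] at hlim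
  refine not_tendsto_div_phiD_zero ?_ (by positivity) (L := |Real.log (2 * C)| + m) ?_ (fun k => ?_)
    hbound hlim
  · simp_rw [pow_mul]
    exact (tendsto_pow_atTop_atTop_of_one_lt (one_lt_pow₀ one_lt_two (by omega))).const_mul_atTop
      (by positivity)
  · linarith [abs_nonneg (Real.log (2 * C)), (Nat.one_le_cast (α := ℝ)).mpr hm]
  · refine (Real.log_mul_two_pow_le (by positivity) _).trans ?_
    push_cast
    nlinarith [abs_nonneg (Real.log (2 * C)), k.cast_nonneg (α := ℝ)]
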